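/- arXiv:1808.02566 — 2 statements merged into one kernel-verified Lean document; each statement's English description precedes it below -/
import Mathlib

section
/- Let K, L : Ω × Ω → ℂ be reproducing kernels for H²(Ω). Then for every W ∈ H²(Ω) and every ζ ∈ Ω, W(ζ) = ∫_Ω ( K(z,ζ)·Re W(z) + L(z,ζ)·Im W(z) ) dA(z). -/
open MeasureTheory Complex Filter Topology

/-- The Vekua integral operator `(T_Ω φ)(z) = (1/π) ∫_Ω φ(ζ)/(z − ζ) dA(ζ)`. -/
noncomputable def Tom (Ω : Set ℂ) (φ : ℂ → ℂ) (z : ℂ) : ℂ :=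
  (1 / (Real.pi : ℂ)) * ∫ ζ in Ω, φ ζ / (z - ζ)

/-- The Wirtinger derivative `∂z̄ W (z) = (1/2)(∂ₓW(z) + i ∂ᵧW(z))`, where the
partial derivatives are the real Fréchet derivative applied to `1` and `i`. -/
noncomputable def dzbar (W : ℂ → ℂ) (z : ℂ) : ℂ :=
  (1 / 2 : ℂ) * (fderiv ℝ W z 1 + Complex.I * fderiv ℝ W z Complex.I)

/-- `f` is Hölder continuous with exponent `α` on every compact subset of `S`. -/
def HolderOnCompactsOf (f : ℂ → ℂ) (α : ℝ) (S : Set ℂ) : Prop :=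
  ∀ K : Set ℂ, K ⊆ S → IsCompact K →
    ∃ C > 0, ∀ z₁ ∈ K, ∀ z₂ ∈ K,
      ‖f z₁ - f z₂‖ ≤ C * ‖z₁ - z₂‖ ^ α

/-- `W` is a classical solution of the Vekua equation `∂z̄ W = a W + b conj W`
on `Ω`: it is continuously real-differentiable on `Ω` and satisfies the
equation there. -/
def VekuaSol (a b : ℂ → ℂ) (Ω : Set ℂ) (W : ℂ → ℂ) : Prop :=
  ContDiffOn ℝ 1 W Ω ∧
    ∀ z ∈ Ω, dzbar W z = a z * W z + b z * (starRingEnd ℂ) (W z)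

/-- Membership in the Bergman space `H²(Ω)` of the Vekua equation: a classical
solution on `Ω` which is square integrable over `Ω`. -/
def MemH2 (a b : ℂ → ℂ) (Ω : Set ℂ) (W : ℂ → ℂ) : Prop :=
  VekuaSol a b Ω W ∧ IntegrableOn (fun z => ‖W z‖ ^ 2) Ω

/-- `K, L : ℂ → ℂ → ℂ` are reproducing kernels for `H²(Ω)`: for each `ζ ∈ Ω`
the functions `K ζ ·` and `L ζ ·` belong to `H²(Ω)`, and they represent the
real and imaginary parts of the point evaluations. -/
def IsReproducingKernels (a b : ℂ → ℂ) (Ω : Set ℂ) (K L : ℂ → ℂ → ℂ) : Prop :=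
  (∀ ζ ∈ Ω, MemH2 a b Ω (K ζ) ∧ MemH2 a b Ω (L ζ)) ∧
    ∀ W : ℂ → ℂ, MemH2 a b Ω W → ∀ ζ ∈ Ω,
      (W ζ).re = (∫ z in Ω, W z * (starRingEnd ℂ) (K ζ z)).re ∧
      (W ζ).im = (∫ z in Ω, W z * (starRingEnd ℂ) (L ζ z)).re

/-! Applying the reproducing property to the kernels themselves, and using that the real inner
product `Re ∫ U conj V` is symmetric, gives `K(z,ζ) = Re K(ζ,z) + i Re L(ζ,z)` and
`L(z,ζ) = Im K(ζ,z) + i Im L(ζ,z)`. Hence the integrand is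
`Re (W conj K(ζ,·)) + i Re (W conj L(ζ,·))`, whose integral is `Re W(ζ) + i Im W(ζ)` by the
reproducing property once more. -/

open ComplexConjugate

theorem re_integral_mul_conj_comm {X : Type*} [MeasurableSpace X] (μ : Measure X)
    (U V : X → ℂ) :
    (∫ x, U x * conj (V x) ∂μ).re = (∫ x, V x * conj (U x) ∂μ).re := by
  rw [← conj_re, ← integral_conj]
  simp only [map_mul, conj_conj, mul_comm]

theorem integral_ofReal_re_add_ofReal_re_mul_I {X : Type*} [MeasurableSpace X] {μ : Measure X}
    {F G : X → ℂ} (hF : Integrable F μ) (hG : Integrable G μ) :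
    ∫ x, ((F x).re + (G x).re * I : ℂ) ∂μ = (∫ x, F x ∂μ).re + (∫ x, G x ∂μ).re * I := by
  have hFre : Integrable (fun x => ((F x).re : ℂ)) μ := hF.re.ofReal
  have hGre : Integrable (fun x => ((G x).re : ℂ)) μ := hG.re.ofReal
  rw [integral_add hFre (hGre.mul_const I), integral_mul_const, integral_complex_ofReal,
    integral_complex_ofReal]
  exact congrArg₂ (fun r s : ℝ => (r + s * I : ℂ)) (integral_re hF) (integral_re hG)

theorem MemH2.memLp_two {a b W : ℂ → ℂ} {Ω : Set ℂ} (hΩ : IsOpen Ω) (hW : MemH2 a b Ω W) :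
    MemLp W 2 (volume.restrict Ω) :=
  (memLp_two_iff_integrable_sq_norm
    (hW.1.1.continuousOn.aestronglyMeasurable hΩ.measurableSet)).2 hW.2

theorem MemH2.integrableOn_mul_conj {a b U V : ℂ → ℂ} {Ω : Set ℂ} (hΩ : IsOpen Ω)
    (hU : MemH2 a b Ω U) (hV : MemH2 a b Ω V) :
    IntegrableOn (fun z => U z * conj (V z)) Ω :=
  (hU.memLp_two hΩ).integrable_mul (hV.memLp_two hΩ).star

namespace IsReproducingKernels

variable {a b : ℂ → ℂ} {Ω : Set ℂ} {K L : ℂ → ℂ → ℂ}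

theorem K_apply_swap (hKL : IsReproducingKernels a b Ω K L) {z ζ : ℂ} (hz : z ∈ Ω)
    (hζ : ζ ∈ Ω) : K z ζ = ⟨(K ζ z).re, (L ζ z).re⟩ := by
  obtain ⟨hmem, hrep⟩ := hKL
  apply Complex.ext
  · rw [(hrep _ (hmem z hz).1 ζ hζ).1, (hrep _ (hmem ζ hζ).1 z hz).1, re_integral_mul_conj_comm]
  · rw [(hrep _ (hmem z hz).1 ζ hζ).2, (hrep _ (hmem ζ hζ).2 z hz).1, re_integral_mul_conj_comm]

theorem L_apply_swap (hKL : IsReproducingKernels a b Ω K L) {z ζ : ℂ} (hz : z ∈ Ω)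
    (hζ : ζ ∈ Ω) : L z ζ = ⟨(K ζ z).im, (L ζ z).im⟩ := by
  obtain ⟨hmem, hrep⟩ := hKL
  apply Complex.ext
  · rw [(hrep _ (hmem z hz).2 ζ hζ).1, (hrep _ (hmem ζ hζ).1 z hz).2, re_integral_mul_conj_comm]
  · rw [(hrep _ (hmem z hz).2 ζ hζ).2, (hrep _ (hmem ζ hζ).2 z hz).2, re_integral_mul_conj_comm]

theorem K_mul_re_add_L_mul_im (hKL : IsReproducingKernels a b Ω K L) {z ζ : ℂ} (hz : z ∈ Ω)
    (hζ : ζ ∈ Ω) (w : ℂ) :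
    K z ζ * w.re + L z ζ * w.im = (w * conj (K ζ z)).re + (w * conj (L ζ z)).re * I := by
  rw [hKL.K_apply_swap hz hζ, hKL.L_apply_swap hz hζ]
  apply Complex.ext <;>
    simp only [add_re, add_im, mul_re, mul_im, ofReal_re, ofReal_im, I_re, I_im, conj_re,
      conj_im] <;>
    ring

end IsReproducingKernels

theorem kernel_reproducing_general (Ω : Set ℂ) (hop : IsOpen Ω)
    (a b : ℂ → ℂ)
    (K L : ℂ → ℂ → ℂ) (hKL : IsReproducingKernels a b Ω K L) :
    ∀ W : ℂ → ℂ, MemH2 a b Ω W → ∀ ζ ∈ Ω,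
      W ζ = ∫ z in Ω, (K z ζ * ((W z).re : ℂ) + L z ζ * ((W z).im : ℂ)) := by
  intro W hW ζ hζ
  have hK := hW.integrableOn_mul_conj hop (hKL.1 ζ hζ).1
  have hL := hW.integrableOn_mul_conj hop (hKL.1 ζ hζ).2
  rw [setIntegral_congr_fun hop.measurableSet fun z hz => hKL.K_mul_re_add_L_mul_im hz hζ (W z),
    integral_ofReal_re_add_ofReal_re_mul_I hK hL, ← (hKL.2 W hW ζ hζ).1, ← (hKL.2 W hW ζ hζ).2,
    re_add_im]

/-- Reproducing formula: for `W ∈ H²(Ω)` and `ζ ∈ Ω`,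
`W(ζ) = ∫_Ω (K(z,ζ) Re W(z) + L(z,ζ) Im W(z)) dA(z)`. -/
theorem kernel_reproducing (Ω : Set ℂ) (hne : Ω.Nonempty) (hop : IsOpen Ω)
    (hconn : IsConnected Ω) (hbd : Bornology.IsBounded Ω)
    (α : ℝ) (hα0 : 0 < α) (hα1 : α < 1)
    (a b : ℂ → ℂ)
    (hab : ∃ M : ℝ, ∀ z ∈ Ω, ‖a z‖ ≤ M ∧ ‖b z‖ ≤ M)
    (haH : HolderOnCompactsOf a α Ω) (hbH : HolderOnCompactsOf b α Ω)
    (K L : ℂ → ℂ → ℂ) (hKL : IsReproducingKernels a b Ω K L) :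
    ∀ W : ℂ → ℂ, MemH2 a b Ω W → ∀ ζ ∈ Ω,
      W ζ = ∫ z in Ω, (K z ζ * ((W z).re : ℂ) + L z ζ * ((W z).im : ℂ)) :=
  kernel_reproducing_general Ω hop a b K L hKL
end

section
/- H²(Ω) has a countable complete subset: there exists a sequence (Vₙ)_{n∈ℕ} of elements of H²(Ω) such that the set of finite real linear combinations of the Vₙ is dense in H²(Ω) with respect to the L²(Ω) norm, i.e., for every W ∈ H²(Ω) and ε > 0 there exist finitely many real coefficients c₁,…,c_N with ∫_Ω |W(z) − Σ_{n=1}^N cₙ Vₙ(z)|² dA(z) < ε². -/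
open MeasureTheory Complex Filter Topology

/-! The Bergman space `H²(Ω)` sits inside `L²(Ω)`, which is separable because Lebesgue measure
restricted to a measurable set is a separable measure. A subset of a separable metric space is
separable, so `H²(Ω)` contains a sequence that is dense in it; a single term of that sequence is
already an approximating linear combination. -/

theorem TopologicalSpace.exists_seq_forall_dist_lt {ι X : Type*} [PseudoMetricSpace X]
    [SeparableSpace X] [Nonempty ι] (F : ι → X) :
    ∃ v : ℕ → ι, ∀ i, ∀ ε > 0, ∃ n, dist (F i) (F (v n)) < ε := by
  obtain ⟨u, hu⟩ := exists_dense_seq (Set.range F)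
  choose v hv using fun n => (u n).2
  refine ⟨v, fun i ε hε => ?_⟩
  obtain ⟨n, hn⟩ := hu.exists_dist_lt ⟨F i, i, rfl⟩ hε
  exact ⟨n, by simpa [hv, Subtype.dist_eq] using hn⟩

namespace MeasureTheory

variable {α E : Type*} [MeasurableSpace α] {μ : Measure α} [NormedAddCommGroup E]

theorem MemLp.integral_norm_sq_eq {f : α → E} (hf : MemLp f 2 μ) :
    ∫ x, ‖f x‖ ^ 2 ∂μ = ‖hf.toLp f‖ ^ 2 := by
  rw [Lp.norm_toLp, toReal_eLpNorm hf.1,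
    lpNorm_eq_integral_norm_rpow_toReal two_ne_zero ENNReal.ofNat_ne_top hf.1]
  simp only [ENNReal.toReal_ofNat, Real.rpow_two]
  exact (Real.rpow_inv_natCast_pow (integral_nonneg fun x => by positivity) two_ne_zero).symm

theorem exists_seq_integral_norm_sub_sq_lt [IsSeparable μ] [TopologicalSpace.SeparableSpace E]
    (P : (α → E) → Prop) (hP : ∀ f, P f → MemLp f 2 μ) (hne : ∃ f, P f) :
    ∃ V : ℕ → α → E, (∀ n, P (V n)) ∧
      ∀ f, P f → ∀ ε > 0, ∃ n, ∫ x, ‖f x - V n x‖ ^ 2 ∂μ < ε ^ 2 := by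
  have : Fact ((2 : ENNReal) ≠ ⊤) := ⟨ENNReal.ofNat_ne_top⟩
  have : Nonempty {f // P f} := nonempty_subtype.2 hne
  obtain ⟨v, hv⟩ := TopologicalSpace.exists_seq_forall_dist_lt
    fun f : {f // P f} => ((hP f.1 f.2).toLp f.1 : Lp E 2 μ)
  refine ⟨fun n => v n, fun n => (v n).2, fun f hf ε hε => ?_⟩
  obtain ⟨n, hn⟩ := hv ⟨f, hf⟩ ε hε
  have hsub := (hP f hf).sub (hP _ (v n).2)
  refine ⟨n, ?_⟩
  calc ∫ x, ‖f x - (v n).1 x‖ ^ 2 ∂μ = ‖hsub.toLp _‖ ^ 2 := hsub.integral_norm_sq_eq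
    _ < ε ^ 2 := by
      rw [MemLp.toLp_sub (hP f hf) (hP _ (v n).2), ← dist_eq_norm]
      gcongr

end MeasureTheory

theorem memH2_zero (a b : ℂ → ℂ) (Ω : Set ℂ) : MemH2 a b Ω 0 :=
  ⟨⟨contDiffOn_const, fun z _ => by simp [dzbar]⟩, by simp⟩

theorem MemH2.memLp {a b : ℂ → ℂ} {Ω : Set ℂ} (hΩ : MeasurableSet Ω) {W : ℂ → ℂ}
    (hW : MemH2 a b Ω W) : MemLp W 2 (volume.restrict Ω) :=
  (memLp_two_iff_integrable_sq_norm
    (hW.1.1.continuousOn.aestronglyMeasurable hΩ)).2 hW.2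

theorem H2_countable_complete_general (Ω : Set ℂ) (hop : IsOpen Ω)
    (a b : ℂ → ℂ) :
    ∃ V : ℕ → ℂ → ℂ, (∀ n, MemH2 a b Ω (V n)) ∧
      ∀ W : ℂ → ℂ, MemH2 a b Ω W → ∀ ε > (0 : ℝ),
        ∃ (N : ℕ) (c : ℕ → ℝ),
          (∫ z in Ω,
            ‖W z - ∑ n ∈ Finset.range N, (c n : ℂ) * V n z‖ ^ 2)
            < ε ^ 2 := by
  obtain ⟨V, hV, hdense⟩ := exists_seq_integral_norm_sub_sq_lt (μ := volume.restrict Ω)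
    (MemH2 a b Ω) (fun W hW => hW.memLp hop.measurableSet) ⟨0, memH2_zero a b Ω⟩
  refine ⟨V, hV, fun W hW ε hε => ?_⟩
  obtain ⟨n, hn⟩ := hdense W hW ε hε
  refine ⟨n + 1, fun m => if m = n then 1 else 0, ?_⟩
  simpa [apply_ite (fun x : ℝ => (x : ℂ)), ite_mul] using hn

/-- `H²(Ω)` has a countable complete subset: a sequence of elements of `H²(Ω)`
whose finite real linear combinations are dense in `H²(Ω)` with respect to the
`L²(Ω)` norm. -/
theorem H2_countable_complete (Ω : Set ℂ) (hne : Ω.Nonempty) (hop : IsOpen Ω)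
    (hconn : IsConnected Ω) (hbd : Bornology.IsBounded Ω)
    (α : ℝ) (hα0 : 0 < α) (hα1 : α < 1)
    (a b : ℂ → ℂ)
    (hab : ∃ M : ℝ, ∀ z ∈ Ω, ‖a z‖ ≤ M ∧ ‖b z‖ ≤ M)
    (haH : HolderOnCompactsOf a α Ω) (hbH : HolderOnCompactsOf b α Ω) :
    ∃ V : ℕ → ℂ → ℂ, (∀ n, MemH2 a b Ω (V n)) ∧
      ∀ W : ℂ → ℂ, MemH2 a b Ω W → ∀ ε > (0 : ℝ),
        ∃ (N : ℕ) (c : ℕ → ℝ),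
          (∫ z in Ω,
            ‖W z - ∑ n ∈ Finset.range N, (c n : ℂ) * V n z‖ ^ 2)
            < ε ^ 2 :=
  H2_countable_complete_general Ω hop a b
end
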